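/- Let Δ = {z ∈ ℂ : |z| < 1} be the open unit disc and I = (−1,1). Then the function u(z) = |Im(arctanh z)|, where arctanh z = (1/2)log((1+z)/(1−z)), belongs to U(I,Δ) and is maximal: v(z) ≤ |Im(arctanh z)| for every v ∈ U(I,Δ) and every z ∈ Δ. -/

import Mathlib

open Metric Filter Complex Set

/-- A function `u : ℂ → ℝ` is *subharmonic* on an open set `D ⊆ ℂ` if it is upper
semicontinuous on `D` and satisfies the sub-mean-value inequality on every closed
disc contained in `D`. -/
def SubharmonicOn (u : ℂ → ℝ) (D : Set ℂ) : Prop :=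
  UpperSemicontinuousOn u D ∧
    ∀ c : ℂ, ∀ r : ℝ, 0 < r → closedBall c r ⊆ D →
      u c ≤ (2 * Real.pi)⁻¹ * ∫ θ in (0:ℝ)..(2 * Real.pi), u (circleMap c r θ)

/-- The complex inverse hyperbolic tangent, `arctanh z = (1/2) log ((1+z)/(1-z))`. -/
noncomputable def carctanh (z : ℂ) : ℂ := (1 / 2 : ℂ) * Complex.log ((1 + z) / (1 - z))

/-- The class `𝒰(I, Δ)` for the analytic pair `(I, Δ)`, `I = (-1,1)` and `Δ` the unit
disc: subharmonic functions `u : Δ → [0, π/4)` vanishing on `I`. -/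
def MemPSHU (u : ℂ → ℝ) : Prop :=
  SubharmonicOn u (ball (0 : ℂ) 1) ∧
    (∀ z ∈ ball (0 : ℂ) 1, 0 ≤ u z ∧ u z < Real.pi / 4) ∧
    ∀ x : ℝ, x ∈ Set.Ioo (-1 : ℝ) 1 → u (x : ℂ) = 0

open Topology intervalIntegral


lemma circle_mean_eq {f : ℂ → ℂ} {c : ℂ} {r : ℝ} (hr : 0 < r)
    (hf : DifferentiableOn ℂ f (closedBall c r)) :
    (∫ θ in (0:ℝ)..(2*Real.pi), f (circleMap c r θ)) = (2*Real.pi : ℂ) * f c := by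
  have h := hf.circleIntegral_sub_inv_smul (mem_ball_self hr)
  rw [circleIntegral] at h
  simp only [deriv_circleMap, circleMap_sub_center, smul_eq_mul] at h
  have key : ∀ θ : ℝ, circleMap 0 r θ * I * ((circleMap 0 r θ)⁻¹ * f (circleMap c r θ))
      = I * f (circleMap c r θ) := by
    intro θ
    have h0 : circleMap 0 r θ ≠ 0 := by
      simpa using circleMap_ne_center (c := 0) hr.ne' (θ := θ)
    field_simp
  simp only [key] at h
  rw [intervalIntegral.integral_const_mul] at h
  have h' : I * (∫ θ in (0:ℝ)..(2*Real.pi), f (circleMap c r θ))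
      = I * ((2*Real.pi : ℂ) * f c) := by rw [h]; ring
  exact mul_left_cancel₀ I_ne_zero h'

lemma circle_cont {f : ℂ → ℂ} {c : ℂ} {r : ℝ} (hr : 0 < r)
    (hf : ContinuousOn f (closedBall c r)) :
    Continuous (fun θ : ℝ => f (circleMap c r θ)) :=
  continuousOn_univ.1 <| hf.comp (continuous_circleMap c r).continuousOn
    fun θ _ => circleMap_mem_closedBall c hr.le θ

lemma circle_mean_re {f : ℂ → ℂ} {c : ℂ} {r : ℝ} (hr : 0 < r)
    (hf : DifferentiableOn ℂ f (closedBall c r)) :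
    (f c).re = (2*Real.pi)⁻¹ * ∫ θ in (0:ℝ)..(2*Real.pi), (f (circleMap c r θ)).re := by
  have hcont := circle_cont hr hf.continuousOn
  have hint : IntervalIntegrable (fun θ : ℝ => f (circleMap c r θ))
      MeasureTheory.volume 0 (2*Real.pi) := hcont.intervalIntegrable _ _
  have h2 := Complex.reCLM.intervalIntegral_comp_comm hint
  simp only [Complex.reCLM_apply] at h2
  rw [h2, circle_mean_eq hr hf]
  have : ((2*Real.pi : ℂ) * f c).re = (2*Real.pi) * (f c).re := by
    simp [Complex.mul_re]
  rw [this, ← mul_assoc, inv_mul_cancel₀ (by positivity : (2*Real.pi) ≠ 0), one_mul]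

lemma circle_normSq_integral (c : ℂ) (r : ℝ) :
    ∫ θ in (0:ℝ)..(2*Real.pi), Complex.normSq (circleMap c r θ)
      = 2*Real.pi * (Complex.normSq c + r^2) := by
  have key : ∀ θ : ℝ, Complex.normSq (circleMap c r θ)
      = (Complex.normSq c + r^2) + ((2*r*c.re) * Real.cos θ + (2*r*c.im) * Real.sin θ) := by
    intro θ
    have h1 := Real.sin_sq_add_cos_sq θ
    simp only [circleMap, Complex.normSq_apply, Complex.add_re, Complex.add_im,
      Complex.mul_re, Complex.mul_im, Complex.ofReal_re, Complex.ofReal_im,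
      Complex.exp_ofReal_mul_I_re, Complex.exp_ofReal_mul_I_im]
    nlinarith [h1]
  simp only [key]
  rw [intervalIntegral.integral_add (intervalIntegrable_const)
      (Continuous.intervalIntegrable (u := fun θ : ℝ =>
        2*r*c.re * Real.cos θ + 2*r*c.im * Real.sin θ) (by fun_prop) _ _),
    intervalIntegral.integral_add
      (Continuous.intervalIntegrable (u := fun θ : ℝ => 2*r*c.re * Real.cos θ) (by fun_prop) _ _)
      (Continuous.intervalIntegrable (u := fun θ : ℝ => 2*r*c.im * Real.sin θ) (by fun_prop) _ _),
    intervalIntegral.integral_const_mul, intervalIntegral.integral_const_mul,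
    integral_cos, integral_sin, integral_const]
  simp [Real.sin_two_pi, Real.cos_two_pi]

lemma max_principle {D : Set ℂ} (hD : IsOpen D) (hb : Bornology.IsBounded D)
    {s : ℂ → ℝ} (hs : SubharmonicOn s D) {B : ℝ} (hB : ∀ z ∈ D, s z ≤ B)
    (hbd : ∀ p ∈ frontier D, ∀ δ > 0, ∀ᶠ z in 𝓝[D] p, s z < δ) :
    ∀ z ∈ D, s z ≤ 0 := by
  intro z₀ hz₀
  obtain ⟨R, hR⟩ := hb.subset_closedBall 0
  have hR0 : 0 ≤ R := by
    have := hR hz₀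
    simp only [mem_closedBall, dist_zero_right] at this
    exact le_trans (norm_nonneg _) this
  have hnsq : ∀ z ∈ D, Complex.normSq z ≤ R^2 := by
    intro z hz
    have h1 : ‖z‖ ≤ R := by simpa [mem_closedBall, dist_zero_right] using hR hz
    have := Complex.normSq_eq_norm_sq z
    rw [this]
    have : ‖z‖ = ‖z‖ := rfl
    rw [this]
    nlinarith [norm_nonneg z]
  -- reduce to: ∀ ε > 0, s z₀ ≤ ε * (R^2 + 1)
  have main : ∀ ε > (0:ℝ), s z₀ ≤ ε * (R^2 + 1) := by
    intro ε hε
    set t : ℂ → ℝ := fun z => s z + ε * Complex.normSq z with ht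
    have htB : ∀ z ∈ D, t z ≤ B + ε * R^2 := by
      intro z hz
      have := hnsq z hz
      have := hB z hz
      simp only [ht]
      nlinarith
    have hne : (t '' D).Nonempty := ⟨t z₀, mem_image_of_mem t hz₀⟩
    have hbdd : BddAbove (t '' D) := by
      refine ⟨B + ε * R^2, ?_⟩
      rintro y ⟨z, hz, rfl⟩
      exact htB z hz
    set A := sSup (t '' D) with hA
    have htA : ∀ z ∈ D, t z ≤ A := fun z hz => le_csSup hbdd (mem_image_of_mem t hz)
    -- key claim : A ≤ ε * R^2
    have key : A ≤ ε * R^2 := by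
      by_contra hcon
      push_neg at hcon
      -- a sequence approaching the sup
      have hseq : ∀ n : ℕ, ∃ z ∈ D, A - 1/(n+1) < t z := by
        intro n
        have h1 : A - 1/(n+1) < A := by
          have : (0:ℝ) < 1/(n+1) := by positivity
          linarith
        obtain ⟨y, hy, hy2⟩ := exists_lt_of_lt_csSup hne h1
        obtain ⟨z, hz, rfl⟩ := hy
        exact ⟨z, hz, hy2⟩
      choose w hw hw2 using hseq
      have hwD : ∀ n, w n ∈ closure D := fun n => subset_closure (hw n)
      have hcompact : IsCompact (closure D) :=
        Metric.isCompact_of_isClosed_isBounded isClosed_closure hb.closure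
      obtain ⟨p, hp, φ, hφ, hφ2⟩ := hcompact.tendsto_subseq hwD
      -- t (w (φ n)) → A
      have htend : Tendsto (fun n => t (w (φ n))) atTop (𝓝 A) := by
        have hlow : Tendsto (fun n : ℕ => A - 1/(φ n + 1)) atTop (𝓝 A) := by
          have h1 : Tendsto (fun n : ℕ => 1/((φ n : ℝ)+1)) atTop (𝓝 0) := by
            apply Tendsto.comp (g := fun m : ℕ => 1/((m:ℝ)+1))
            · exact tendsto_one_div_add_atTop_nhds_zero_nat
            · exact hφ.tendsto_atTop
          simpa using tendsto_const_nhds.sub h1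
        refine tendsto_of_tendsto_of_tendsto_of_le_of_le hlow tendsto_const_nhds
          (fun n => (hw2 (φ n)).le) (fun n => htA _ (hw (φ n)))
      have htendin : Tendsto (fun n => w (φ n)) atTop (𝓝[D] p) := by
        rw [tendsto_nhdsWithin_iff]
        exact ⟨hφ2, Eventually.of_forall fun n => hw (φ n)⟩
      by_cases hpD : p ∈ D
      · -- interior max point
        have hApt : A ≤ t p := by
          by_contra hlt
          push_neg at hlt
          set d := (A - t p)/2 with hd
          have hd0 : 0 < d := by
            rw [hd]
            exact div_pos (sub_pos.2 hlt) two_pos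
          have husc := hs.1 p hpD (s p + d/2) (by linarith)
          have hcont : ∀ᶠ z in 𝓝[D] p, ε * Complex.normSq z < ε * Complex.normSq p + d/2 := by
            have hc : Tendsto (fun z : ℂ => ε * Complex.normSq z) (𝓝[D] p)
                (𝓝 (ε * Complex.normSq p)) :=
              ((continuous_const.mul Complex.continuous_normSq).tendsto p).mono_left
                nhdsWithin_le_nhds
            exact hc (Iio_mem_nhds (by linarith))
          have hev : ∀ᶠ z in 𝓝[D] p, t z < t p + d := by
            filter_upwards [husc, hcont] with z h1 h2
            simp only [ht]; linarith
          have := htendin.eventually hev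
          have hltA : A ≤ t p + d := le_of_tendsto htend (by
            filter_upwards [this] with n hn using hn.le)
          simp only [hd] at hltA
          linarith
        have hAeq : t p = A := le_antisymm (htA p hpD) hApt
        obtain ⟨r₀, hr₀, hball⟩ := Metric.isOpen_iff.1 hD p hpD
        set r := r₀/2 with hrdef
        have hr : 0 < r := by positivity
        have hsub : closedBall p r ⊆ D :=
          (closedBall_subset_ball (by simp only [hrdef]; linarith)).trans hball
        have hsm := hs.2 p r hr hsub
        by_cases hint : IntervalIntegrable (fun θ => s (circleMap p r θ))
            MeasureTheory.volume 0 (2*Real.pi)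
        · have hptw : ∀ θ ∈ Set.uIcc (0:ℝ) (2*Real.pi),
              s (circleMap p r θ) ≤ A - ε * Complex.normSq (circleMap p r θ) := by
            intro θ _
            have hmem : circleMap p r θ ∈ D := hsub (circleMap_mem_closedBall p hr.le θ)
            have := htA _ hmem
            simp only [ht] at this
            linarith
          have hint2 : IntervalIntegrable
              (fun θ => A - ε * Complex.normSq (circleMap p r θ))
              MeasureTheory.volume 0 (2*Real.pi) := by
            apply Continuous.intervalIntegrable
            exact continuous_const.sub (continuous_const.mul
              (Complex.continuous_normSq.comp (continuous_circleMap p r)))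
          have hmono := intervalIntegral.integral_mono_on
            (by positivity : (0:ℝ) ≤ 2*Real.pi) hint hint2
            (fun θ hθ => hptw θ (by
              rw [Set.uIcc_of_le (by positivity : (0:ℝ) ≤ 2*Real.pi)]; exact hθ))
          rw [intervalIntegral.integral_sub intervalIntegrable_const
              (by
                apply Continuous.intervalIntegrable
                exact continuous_const.mul
                  (Complex.continuous_normSq.comp (continuous_circleMap p r))),
            intervalIntegral.integral_const,
            intervalIntegral.integral_const_mul, circle_normSq_integral] at hmono
          have hπ : (0:ℝ) < 2*Real.pi := by positivity
          have hsp : s p ≤ A - ε * Complex.normSq p - ε * r^2 := by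
            have h2 := le_trans hsm (by
              apply mul_le_mul_of_nonneg_left hmono (by positivity : (0:ℝ) ≤ (2*Real.pi)⁻¹))
            have heq : (2*Real.pi)⁻¹ * ((2*Real.pi - 0) • A
                - ε * (2*Real.pi * (Complex.normSq p + r^2)))
                = A - ε * Complex.normSq p - ε * r^2 := by
              field_simp
              ring
            rw [heq] at h2
            exact h2
          have : t p ≤ A - ε * r^2 := by simp only [ht]; linarith
          rw [hAeq] at this
          have hpos2 : 0 < ε * r^2 := by positivity
          linarith
        · rw [intervalIntegral.integral_undef hint] at hsm
          simp only [mul_zero] at hsm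
          have : t p ≤ ε * R^2 := by
            have := hnsq p hpD
            simp only [ht]
            nlinarith
          rw [hAeq] at this
          linarith
      · -- boundary point
        have hpf : p ∈ frontier D := by
          rw [frontier, hD.interior_eq]
          exact ⟨hp, hpD⟩
        set δ := (A - ε * R^2)/2 with hδ
        have hδ0 : 0 < δ := by simp only [hδ]; linarith
        have hev := hbd p hpf δ hδ0
        have hev2 : ∀ᶠ z in 𝓝[D] p, t z < δ + ε * R^2 := by
          rw [eventually_iff_exists_mem] at hev ⊢
          obtain ⟨U, hU, hU2⟩ := hev
          refine ⟨U ∩ D, inter_mem hU self_mem_nhdsWithin, ?_⟩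
          rintro z ⟨hz1, hz2⟩
          have := hU2 z hz1
          have := hnsq z hz2
          simp only [ht]
          nlinarith
        have := htendin.eventually hev2
        have hle : A ≤ δ + ε * R^2 := le_of_tendsto htend (by
          filter_upwards [this] with n hn using hn.le)
        simp only [hδ] at hle
        linarith
    have h1 := htA z₀ hz₀
    have h2 : 0 ≤ Complex.normSq z₀ := Complex.normSq_nonneg z₀
    simp only [ht] at h1
    nlinarith
  by_contra hcon
  push_neg at hcon
  have hpos : (0:ℝ) < R^2 + 1 := by positivity
  have := main (s z₀ / (2*(R^2+1))) (by positivity)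
  have heq : s z₀ / (2*(R^2+1)) * (R^2+1) = s z₀/2 := by field_simp
  rw [heq] at this
  linarith

lemma usc_sub_cont {v : ℂ → ℝ} {g : ℂ → ℝ} {D U : Set ℂ}
    (hv : UpperSemicontinuousOn v D) (hg : ContinuousOn g U) (hDU : D ⊆ U) :
    UpperSemicontinuousOn (fun z => v z - g z) D := by
  intro x hx y hy
  set d := y - (v x - g x) with hd
  have hd0 : 0 < d := by rw [hd]; simp only [Set.mem_setOf_eq] at hy ⊢; linarith [hy]
  have h1 := hv x hx (v x + d/2) (by linarith)
  have h2 : ∀ᶠ z in 𝓝[D] x, g x - d/2 < g z := by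
    have : Tendsto g (𝓝[D] x) (𝓝 (g x)) :=
      ((hg x (hDU hx)).mono hDU).tendsto
    exact this (Ioi_mem_nhds (by linarith))
  filter_upwards [h1, h2] with z hz1 hz2
  have hy' : y = v x - g x + d := by rw [hd]; ring
  rw [hy']
  linarith

lemma subharmonicOn_sub_re {v : ℂ → ℝ} {f : ℂ → ℂ} {D : Set ℂ}
    (hv : SubharmonicOn v (ball 0 1)) (hD : D ⊆ ball (0:ℂ) 1)
    (hf : DifferentiableOn ℂ f (ball 0 1))
    (hf0 : ∀ z ∈ D, 0 ≤ (f z).re) :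
    SubharmonicOn (fun z => v z - (f z).re) D := by
  constructor
  · exact usc_sub_cont (hv.1.mono hD)
      (Complex.continuous_re.comp_continuousOn hf.continuousOn) hD
  · intro c r hr hsub
    have hsub' : closedBall c r ⊆ ball (0:ℂ) 1 := hsub.trans hD
    have hfc : DifferentiableOn ℂ f (closedBall c r) := hf.mono hsub'
    have hmean := circle_mean_re hr hfc
    have hreint : IntervalIntegrable (fun θ : ℝ => (f (circleMap c r θ)).re)
        MeasureTheory.volume 0 (2*Real.pi) :=
      (Complex.continuous_re.comp (circle_cont hr hfc.continuousOn)).intervalIntegrable _ _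
    by_cases hint : IntervalIntegrable (fun θ : ℝ => v (circleMap c r θ))
        MeasureTheory.volume 0 (2*Real.pi)
    · have hvc := hv.2 c r hr hsub'
      have heq : (fun θ : ℝ => v (circleMap c r θ) - (f (circleMap c r θ)).re) =
          fun θ : ℝ => (fun w => v w - (f w).re) (circleMap c r θ) := rfl
      rw [← heq, intervalIntegral.integral_sub hint hreint, mul_sub, ← hmean]
      linarith
    · have hint2 : ¬ IntervalIntegrable
          (fun θ : ℝ => v (circleMap c r θ) - (f (circleMap c r θ)).re)
          MeasureTheory.volume 0 (2*Real.pi) := by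
        intro hcon
        have := hcon.add hreint
        simp only [sub_add_cancel] at this
        exact hint this
      have hvc := hv.2 c r hr hsub'
      rw [intervalIntegral.integral_undef hint] at hvc
      have hzero : (∫ θ in (0:ℝ)..(2*Real.pi),
          (fun w => v w - (f w).re) (circleMap c r θ)) = 0 :=
        intervalIntegral.integral_undef hint2
      rw [hzero]
      have hc0 := hf0 c (hsub (mem_closedBall_self hr.le))
      simp only [mul_zero] at hvc ⊢
      linarith

lemma subharmonic_abs_im {f : ℂ → ℂ} (hf : DifferentiableOn ℂ f (ball (0:ℂ) 1)) :
    SubharmonicOn (fun z => |(f z).im|) (ball (0:ℂ) 1) := by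
  constructor
  · exact ((Complex.continuous_im.comp_continuousOn hf.continuousOn).abs).upperSemicontinuousOn
  · intro c r hr hsub
    have hfc : DifferentiableOn ℂ (fun z => -I * f z) (closedBall c r) :=
      ((differentiable_const _).differentiableOn).mul (hf.mono hsub)
    have hmean := circle_mean_re hr hfc
    have him : ∀ w : ℂ, (-I * w).re = w.im := by
      intro w; simp [Complex.mul_re]
    simp only [him] at hmean
    have hcont : Continuous (fun θ : ℝ => (f (circleMap c r θ)).im) :=
      Complex.continuous_im.comp (circle_cont hr (hf.mono hsub).continuousOn)
    calc |(f c).im| = |(2*Real.pi)⁻¹ * ∫ θ in (0:ℝ)..(2*Real.pi), (f (circleMap c r θ)).im| := by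
          rw [← hmean]
      _ ≤ (2*Real.pi)⁻¹ * ∫ θ in (0:ℝ)..(2*Real.pi), |(f (circleMap c r θ)).im| := by
          rw [abs_mul, abs_of_pos (by positivity : (0:ℝ) < (2*Real.pi)⁻¹)]
          have h2 := intervalIntegral.abs_integral_le_integral_abs
            (f := fun θ : ℝ => (f (circleMap c r θ)).im)
            (a := 0) (b := 2*Real.pi) (μ := MeasureTheory.volume) (by positivity)
          exact mul_le_mul_of_nonneg_left h2 (by positivity)

lemma one_sub_ne {z : ℂ} (hz : z ≠ 1) : (1 : ℂ) - z ≠ 0 :=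
  sub_ne_zero.2 (Ne.symm hz)

lemma w_re {z : ℂ} (hz : z ≠ 1) :
    ((1 + z) / (1 - z)).re = (1 - Complex.normSq z) / Complex.normSq (1 - z) := by
  have h0 : Complex.normSq (1 - z) ≠ 0 := (Complex.normSq_pos.2 (one_sub_ne hz)).ne'
  rw [Complex.div_re]
  simp only [Complex.add_re, Complex.add_im, Complex.sub_re, Complex.sub_im,
    Complex.one_re, Complex.one_im, Complex.normSq_apply]
  field_simp
  ring

lemma w_im {z : ℂ} (hz : z ≠ 1) :
    ((1 + z) / (1 - z)).im = 2 * z.im / Complex.normSq (1 - z) := by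
  have h0 : Complex.normSq (1 - z) ≠ 0 := (Complex.normSq_pos.2 (one_sub_ne hz)).ne'
  rw [Complex.div_im]
  simp only [Complex.add_re, Complex.add_im, Complex.sub_re, Complex.sub_im,
    Complex.one_re, Complex.one_im, Complex.normSq_apply]
  field_simp
  ring

lemma normSq_lt_one {z : ℂ} (hz : z ∈ ball (0:ℂ) 1) : Complex.normSq z < 1 := by
  rw [mem_ball_zero_iff] at hz
  rw [Complex.normSq_eq_norm_sq]
  have : ‖z‖ = ‖z‖ := rfl
  nlinarith [norm_nonneg z, hz]

lemma ne_one_of_ball {z : ℂ} (hz : z ∈ ball (0:ℂ) 1) : z ≠ 1 := by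
  intro h
  rw [h] at hz
  simp at hz

lemma w_slit {z : ℂ} (hz : z ∈ ball (0:ℂ) 1) : (1 + z) / (1 - z) ∈ Complex.slitPlane := by
  rw [Complex.mem_slitPlane_iff]
  left
  rw [w_re (ne_one_of_ball hz)]
  have h0 : 0 < Complex.normSq (1 - z) :=
    Complex.normSq_pos.2 (one_sub_ne (ne_one_of_ball hz))
  exact div_pos (by linarith [normSq_lt_one hz]) h0

lemma carctanh_diffAt {z : ℂ} (hz : z ≠ 1) (hsl : (1 + z) / (1 - z) ∈ Complex.slitPlane) :
    DifferentiableAt ℂ carctanh z := by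
  apply DifferentiableAt.const_mul
  exact DifferentiableAt.clog
    (((differentiable_const (1:ℂ)).add differentiable_id).differentiableAt.div
      (((differentiable_const (1:ℂ)).sub differentiable_id).differentiableAt)
      (one_sub_ne hz)) hsl

lemma carctanh_diffOn : DifferentiableOn ℂ carctanh (ball (0:ℂ) 1) :=
  fun z hz => (carctanh_diffAt (ne_one_of_ball hz) (w_slit hz)).differentiableWithinAt

lemma carctanh_contAt {z : ℂ} (hz : z ≠ 1) (hsl : (1 + z) / (1 - z) ∈ Complex.slitPlane) :
    ContinuousAt carctanh z := by
  apply ContinuousAt.mul continuousAt_const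
  have h1 : ContinuousAt (fun z : ℂ => 1 + z) z := continuousAt_const.add continuousAt_id
  have h2 : ContinuousAt (fun z : ℂ => 1 - z) z := continuousAt_const.sub continuousAt_id
  have h3 : ContinuousAt (fun z : ℂ => (1 + z) / (1 - z)) z := h1.div h2 (one_sub_ne hz)
  exact ContinuousAt.comp (x := z) (g := Complex.log)
    (f := fun z : ℂ => (1 + z) / (1 - z)) (continuousAt_clog hsl) h3

lemma carctanh_im (z : ℂ) :
    (carctanh z).im = Complex.arg ((1 + z) / (1 - z)) / 2 := by
  simp only [carctanh, Complex.mul_im, Complex.log_im]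
  norm_num
  ring

lemma carctanh_im_lt {z : ℂ} (hz : z ∈ ball (0:ℂ) 1) :
    |(carctanh z).im| < Real.pi / 4 := by
  rw [carctanh_im, abs_div]
  rw [abs_of_pos (by norm_num : (0:ℝ) < 2)]
  have harg : |Complex.arg ((1 + z) / (1 - z))| < Real.pi / 2 := by
    rw [Complex.abs_arg_lt_pi_div_two_iff]
    left
    rw [w_re (ne_one_of_ball hz)]
    exact div_pos (by linarith [normSq_lt_one hz])
      (Complex.normSq_pos.2 (one_sub_ne (ne_one_of_ball hz)))
  linarith

lemma carctanh_im_real {x : ℝ} (hx : x ∈ Set.Ioo (-1:ℝ) 1) :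
    (carctanh (x:ℂ)).im = 0 := by
  rw [carctanh_im]
  have h1 : (1:ℂ) + x = ((1 + x : ℝ) : ℂ) := by push_cast; ring
  have h2 : (1:ℂ) - x = ((1 - x : ℝ) : ℂ) := by push_cast; ring
  have hx1 : (0:ℝ) < 1 + x := by linarith [hx.1]
  have hx2 : (0:ℝ) < 1 - x := by linarith [hx.2]
  rw [h1, h2, ← Complex.ofReal_div, Complex.arg_ofReal_of_nonneg (by positivity)]
  norm_num

lemma neg_I_mul_re (w : ℂ) : (-I * w).re = w.im := by simp [Complex.mul_re]

lemma sq_re_lt {z : ℂ} (hz : z ∈ ball (0:ℂ) 1) : z.re^2 < 1 := by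
  have h := normSq_lt_one hz
  rw [Complex.normSq_apply] at h
  nlinarith [sq_nonneg z.im, sq_nonneg z.re]

lemma one_sub_sq_slit {z : ℂ} (hz : z ∈ ball (0:ℂ) 1) : 1 - z^2 ∈ Complex.slitPlane := by
  rw [Complex.mem_slitPlane_iff]
  left
  have : (1 - z^2).re = 1 - z.re^2 + z.im^2 := by
    simp [pow_two, Complex.sub_re, Complex.mul_re]
    ring
  rw [this]
  nlinarith [sq_re_lt hz, sq_nonneg z.im]

lemma one_sub_sq_ne {z : ℂ} (hz : z ∈ ball (0:ℂ) 1) : 1 - z^2 ≠ 0 :=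
  Complex.slitPlane_ne_zero (one_sub_sq_slit hz)

lemma log_one_sub_sq_re_le {z : ℂ} (hz : z ∈ ball (0:ℂ) 1) :
    (Complex.log (1 - z^2)).re ≤ Real.log 2 := by
  rw [Complex.log_re]
  have habs : ‖1 - z^2‖ ≤ 2 := by
    have h1 : ‖1 - z^2‖ ≤ 1 + ‖z^2‖ := by
      have := norm_sub_le (1:ℂ) (z^2)
      simpa using this
    have h2 : ‖z^2‖ ≤ 1 := by
      rw [norm_pow]
      have : ‖z‖ < 1 := by rwa [← mem_ball_zero_iff]
      nlinarith [norm_nonneg z]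
    linarith
  have hpos : 0 < ‖1 - z^2‖ := norm_pos_iff.mpr (one_sub_sq_ne hz)
  calc Real.log (‖1 - z^2‖) ≤ Real.log 2 :=
    Real.log_le_log hpos habs |>.trans_eq rfl

lemma log4_eq : Real.log 4 = Real.log 2 + Real.log 2 := by
  rw [show (4:ℝ) = 2*2 by norm_num, Real.log_mul two_ne_zero two_ne_zero]

lemma hfun_nonneg {z : ℂ} (hz : z ∈ ball (0:ℂ) 1) :
    Real.log 2 ≤ Real.log 4 - (Complex.log (1 - z^2)).re := by
  have := log_one_sub_sq_re_le hz
  rw [log4_eq]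
  linarith

lemma sigma_carctanh_nonneg {σ : ℝ} (hσ : σ = 1 ∨ σ = -1) {w : ℂ}
    (hw : w ∈ ball (0:ℂ) 1) (him : 0 < σ * w.im) : 0 ≤ σ * (carctanh w).im := by
  rw [carctanh_im]
  have h0 : 0 < Complex.normSq (1 - w) :=
    Complex.normSq_pos.2 (one_sub_ne (ne_one_of_ball hw))
  have himw := w_im (ne_one_of_ball hw)
  rcases hσ with h | h
  · subst h
    simp only [one_mul] at him ⊢
    have : 0 ≤ ((1 + w)/(1 - w)).im := by
      rw [himw]; positivity
    have harg := Complex.arg_nonneg_iff.2 this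
    linarith
  · subst h
    have himlt : w.im < 0 := by nlinarith
    have : ((1 + w)/(1 - w)).im < 0 := by
      rw [himw]
      apply div_neg_of_neg_of_pos (by linarith) h0
    have harg := Complex.arg_neg_iff.2 this
    nlinarith

lemma halfdisc {σ : ℝ} (hσ : σ = 1 ∨ σ = -1) {v : ℂ → ℝ} (hv : MemPSHU v) :
    ∀ z ∈ ball (0:ℂ) 1, 0 < σ * z.im → v z ≤ σ * (carctanh z).im := by
  have hσ0 : σ ≠ 0 := by rcases hσ with h | h <;> simp [h]
  set D : Set ℂ := ball (0:ℂ) 1 ∩ {w : ℂ | 0 < σ * w.im} with hDdef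
  have hDopen : IsOpen D := isOpen_ball.inter
    (isOpen_lt continuous_const (continuous_const.mul Complex.continuous_im))
  have hDsub : D ⊆ ball (0:ℂ) 1 := inter_subset_left
  have hDbdd : Bornology.IsBounded D := (isBounded_ball).subset hDsub
  have hDmem : ∀ w ∈ D, w ∈ ball (0:ℂ) 1 ∧ 0 < σ * w.im := fun w hw => ⟨hw.1, hw.2⟩
  have hlog2 : (0:ℝ) < Real.log 2 := Real.log_pos (by norm_num)
  -- main estimate with ε
  have main : ∀ ε > (0:ℝ), ∀ z ∈ D,
      v z ≤ σ * (carctanh z).im + ε * (Real.log 4 - (Complex.log (1 - z^2)).re) := by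
    intro ε hε
    set F : ℂ → ℂ := fun w =>
      (σ:ℂ) * (-I * carctanh w) + (ε:ℂ) * ((Real.log 4 : ℂ) - Complex.log (1 - w^2)) with hF
    have hFre : ∀ w : ℂ, (F w).re
        = σ * (carctanh w).im + ε * (Real.log 4 - (Complex.log (1 - w^2)).re) := by
      intro w
      simp only [hF, Complex.add_re, Complex.re_ofReal_mul, neg_I_mul_re,
        Complex.sub_re, Complex.ofReal_re]
    have hFdiff : DifferentiableOn ℂ F (ball (0:ℂ) 1) := by
      apply DifferentiableOn.add
      · exact (((differentiable_const _).differentiableOn).mul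
          (((differentiable_const _).differentiableOn).mul carctanh_diffOn))
      · apply ((differentiable_const _).differentiableOn).mul
        apply DifferentiableOn.sub ((differentiable_const _).differentiableOn)
        intro w hw
        exact (DifferentiableAt.clog
          (((differentiable_const (1:ℂ)).sub ((differentiable_id).pow 2)).differentiableAt)
          (one_sub_sq_slit hw)).differentiableWithinAt
    have hF0 : ∀ w ∈ D, 0 ≤ (F w).re := by
      intro w hw
      rw [hFre]
      have h1 := sigma_carctanh_nonneg hσ hw.1 hw.2
      have h2 := hfun_nonneg hw.1
      nlinarith
    have hsubh : SubharmonicOn (fun w => v w - (F w).re) D :=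
      subharmonicOn_sub_re hv.1 hDsub hFdiff hF0
    have hBnd : ∀ w ∈ D, v w - (F w).re ≤ Real.pi/4 := by
      intro w hw
      have := (hv.2.1 w hw.1).2
      have := hF0 w hw
      linarith
    -- boundary condition
    have hbd : ∀ p ∈ frontier D, ∀ δ > 0, ∀ᶠ z in 𝓝[D] p, v z - (F z).re < δ := by
      intro p hpf δ hδ
      have hpc : p ∈ closure D := hpf.1
      have hclos : closure D ⊆ closedBall (0:ℂ) 1 ∩ {w : ℂ | 0 ≤ σ * w.im} := by
        apply closure_minimal
        · intro w hw
          refine ⟨ball_subset_closedBall hw.1, ?_⟩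
          have h9 : 0 < σ * w.im := hw.2
          exact h9.le
        · exact (Metric.isClosed_closedBall).inter
            (isClosed_le continuous_const (continuous_const.mul Complex.continuous_im))
      have hp1 : ‖p‖ ≤ 1 := by
        have := (hclos hpc).1
        simpa [mem_closedBall, dist_zero_right] using this
      have hp2 : 0 ≤ σ * p.im := (hclos hpc).2
      have hpnD : p ∉ D := by
        intro h
        exact (hDopen.interior_eq ▸ hpf.2) h
      have hevD : ∀ᶠ z in 𝓝[D] p, z ∈ D := self_mem_nhdsWithin
      rcases lt_or_eq_of_le hp1 with hlt | heq1
      · -- interior of disc: p is real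
        have hpball : p ∈ ball (0:ℂ) 1 := by rwa [mem_ball_zero_iff]
        have hpim : p.im = 0 := by
          by_contra hne
          apply hpnD
          refine ⟨hpball, ?_⟩
          rcases lt_or_gt_of_ne (mul_ne_zero hσ0 hne) with h | h
          · linarith
          · exact h
        have hpre : p = ((p.re : ℝ) : ℂ) := by
          apply Complex.ext <;> simp [hpim]
        have hrelt : |p.re| < 1 := by
          calc |p.re| ≤ ‖p‖ := Complex.abs_re_le_norm p
            _ < 1 := by assumption
        have hv0 : v p = 0 := by
          rw [hpre]
          exact hv.2.2 p.re (abs_lt.1 hrelt)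
        have husc := hv.1.1 p hpball δ (by show v p < δ; rw [hv0]; exact hδ)
        have husc2 : ∀ᶠ z in 𝓝[D] p, v z < δ :=
          (husc.filter_mono (nhdsWithin_mono p hDsub))
        filter_upwards [husc2, hevD] with z h1 h2
        have := hF0 z h2
        linarith
      · -- |p| = 1
        by_cases hp1' : p = 1 ∨ p = -1
        · -- corner points : use log blowup
          set m : ℝ := Real.log 4 - Real.pi/(4*ε) + -(δ/ε) with hm
          have habs0 : ‖1 - p^2‖ = 0 := by
            rcases hp1' with h | h <;> (subst h; norm_num)
          have hcont : Tendsto (fun z : ℂ => ‖1 - z^2‖) (𝓝[D] p) (𝓝 0) := by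
            rw [← habs0]
            apply Tendsto.mono_left _ nhdsWithin_le_nhds
            exact continuous_norm.comp
              (continuous_const.sub (continuous_pow 2)) |>.tendsto p
          have hev1 : ∀ᶠ z in 𝓝[D] p, ‖1 - z^2‖ < Real.exp m :=
            hcont (Iio_mem_nhds (Real.exp_pos m))
          filter_upwards [hev1, hevD] with z h1 h2
          have hzball := (hDmem z h2).1
          have hlog : (Complex.log (1 - z^2)).re < m := by
            rw [Complex.log_re]
            calc Real.log (‖1 - z^2‖) < Real.log (Real.exp m) :=
                Real.log_lt_log (norm_pos_iff.mpr (one_sub_sq_ne hzball)) h1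
              _ = m := Real.log_exp m
          have hv4 := (hv.2.1 z hzball).2
          have harg := sigma_carctanh_nonneg hσ hzball (hDmem z h2).2
          have hεne : ε ≠ 0 := ne_of_gt hε
          have heqm : ε * (Real.log 4 - m) = Real.pi/4 + δ := by
            rw [hm]; field_simp; ring
          have h5 : ε * (Real.log 4 - m)
              < ε * (Real.log 4 - (Complex.log (1 - z^2)).re) := by
            apply mul_lt_mul_of_pos_left (by linarith) hε
          rw [heqm] at h5
          rw [hFre]
          linarith
        · -- smooth boundary points: carctanh → σ π/4
          push_neg at hp1'
          have habs1 : ‖p‖ = 1 := by assumption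
          have hpim : p.im ≠ 0 := by
            intro h0
            have hns : Complex.normSq p = 1 := by
              rw [Complex.normSq_eq_norm_sq, habs1]; norm_num
            rw [Complex.normSq_apply, h0] at hns
            have : (p.re - 1) * (p.re + 1) = 0 := by nlinarith
            rcases mul_eq_zero.1 this with h | h
            · exact hp1'.1 (Complex.ext (by simp only [Complex.one_re]; linarith)
                (by simp [h0]))
            · exact hp1'.2 (Complex.ext
                (by simp only [Complex.neg_re, Complex.one_re]; linarith)
                (by simp [h0]))
          have hpimpos : 0 < σ * p.im :=
            lt_of_le_of_ne hp2 (Ne.symm (mul_ne_zero hσ0 hpim))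
          have hns1 : Complex.normSq (1 - p) ≠ 0 :=
            (Complex.normSq_pos.2 (one_sub_ne hp1'.1)).ne'
          have hwim : ((1 + p)/(1 - p)).im = 2 * p.im / Complex.normSq (1 - p) :=
            w_im hp1'.1
          have hwimne : ((1 + p)/(1 - p)).im ≠ 0 := by
            rw [hwim]
            exact div_ne_zero (by simpa using hpim) hns1
          have hslit : (1 + p)/(1 - p) ∈ Complex.slitPlane :=
            Complex.mem_slitPlane_iff.2 (Or.inr hwimne)
          have hwre : ((1 + p)/(1 - p)).re = 0 := by
            rw [w_re hp1'.1]
            have : Complex.normSq p = 1 := by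
              rw [Complex.normSq_eq_norm_sq, habs1]; norm_num
            rw [this]
            simp
          have hval : σ * (carctanh p).im = Real.pi/4 := by
            rw [carctanh_im]
            rcases hσ with h | h
            · subst h
              simp only [one_mul] at hpimpos ⊢
              have hwimpos : 0 < ((1 + p)/(1 - p)).im := by
                rw [hwim]
                apply div_pos (by linarith) (lt_of_le_of_ne (Complex.normSq_nonneg _) (Ne.symm hns1))
              rw [Complex.arg_eq_pi_div_two_iff.2 ⟨hwre, hwimpos⟩]
              ring
            · subst h
              have hax : p.im < 0 := by nlinarith
              have hwimneg : ((1 + p)/(1 - p)).im < 0 := by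
                rw [hwim]
                apply div_neg_of_neg_of_pos (by linarith)
                  (lt_of_le_of_ne (Complex.normSq_nonneg _) (Ne.symm hns1))
              rw [Complex.arg_eq_neg_pi_div_two_iff.2 ⟨hwre, hwimneg⟩]
              ring
          have hcont : ContinuousAt carctanh p := carctanh_contAt hp1'.1 hslit
          have htends : Tendsto (fun z : ℂ => σ * (carctanh z).im) (𝓝[D] p)
              (𝓝 (Real.pi/4)) := by
            rw [← hval]
            apply Tendsto.mono_left _ nhdsWithin_le_nhds
            exact (continuousAt_const.mul (Complex.continuous_im.continuousAt.comp hcont))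
          have hev := htends (Ioi_mem_nhds (by linarith : Real.pi/4 - δ < Real.pi/4))
          filter_upwards [hev, hevD] with z h1 h2
          have hzball := (hDmem z h2).1
          have hv4 := (hv.2.1 z hzball).2
          have hh := hfun_nonneg hzball
          rw [hFre]
          simp only [Set.mem_preimage, Set.mem_Ioi] at h1
          nlinarith
    have hmax := max_principle hDopen hDbdd hsubh hBnd hbd
    intro z hz
    have := hmax z hz
    rw [hFre] at this
    linarith
  intro z hz him
  have hzD : z ∈ D := ⟨hz, him⟩
  have hc : 0 < Real.log 4 - (Complex.log (1 - z^2)).re := by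
    have := hfun_nonneg hz
    linarith
  apply le_of_forall_pos_le_add
  intro δ hδ
  have hm := main (δ / (Real.log 4 - (Complex.log (1 - z^2)).re)) (by positivity) z hzD
  have heq : δ / (Real.log 4 - (Complex.log (1 - z^2)).re)
      * (Real.log 4 - (Complex.log (1 - z^2)).re) = δ := by
    field_simp
  rw [heq] at hm
  linarith

/-- **Theorem 3.3** (first part).  On the unit disc `Δ` with center `I = (-1,1)`, the
function `u z = |Im (arctanh z)|` belongs to `𝒰(I, Δ)` and is maximal there. -/
theorem disc_arctanh_maximal :
    MemPSHU (fun z => |(carctanh z).im|) ∧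
      ∀ v : ℂ → ℝ, MemPSHU v → ∀ z ∈ ball (0 : ℂ) 1, v z ≤ |(carctanh z).im| := by
  constructor
  · refine ⟨subharmonic_abs_im carctanh_diffOn, ?_, ?_⟩
    · intro z hz
      exact ⟨abs_nonneg _, carctanh_im_lt hz⟩
    · intro x hx
      rw [abs_eq_zero]
      exact carctanh_im_real hx
  · intro v hv z hz
    rcases lt_trichotomy z.im 0 with h | h | h
    · have := halfdisc (Or.inr rfl) hv z hz (by nlinarith)
      calc v z ≤ (-1) * (carctanh z).im := this
        _ ≤ |(carctanh z).im| := by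
          rw [neg_one_mul]
          exact neg_le_abs _
    · have hzre : z = ((z.re : ℝ) : ℂ) := by
        apply Complex.ext <;> simp [h]
      have hrelt : |z.re| < 1 := by
        calc |z.re| ≤ ‖z‖ := Complex.abs_re_le_norm z
          _ < 1 := by rwa [← mem_ball_zero_iff]
      have : v z = 0 := by
        rw [hzre]
        exact hv.2.2 z.re (abs_lt.1 hrelt)
      rw [this]
      exact abs_nonneg _
    · have := halfdisc (Or.inl rfl) hv z hz (by nlinarith)
      calc v z ≤ 1 * (carctanh z).im := this
        _ ≤ |(carctanh z).im| := by
          rw [one_mul]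
          exact le_abs_self _
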